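/- Let β_r and ζ be positive integers and set β = ζ·β_r; let m ≥ 1 be a real number. Let x_1,…,x_{β_r} be i.i.d. arcsine-distributed random variables, d uniform on {−1,+1}, and h a Nakagami-m amplitude, all mutually independent. Let Y = h·(1 + ζ·d)·Σ_{k=1}^{β_r} x_k (the correlator output of a β_r-SR-DCSK symbol, whose chips sum to (1+ζd)·Σ_{k=1}^{β_r} x_k). Then for any reals ε₁, ε₂, the harvested DC satisfies ε₁·E[Y²] + ε₂·E[Y⁴] = ε₁·(β_r² + β²)/(2β_r) + ε₂·(3(1+m)/(8m))·(1 + 6ζ² + ζ⁴)·(2β_r² − β_r). -/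

import Mathlib

open MeasureTheory ProbabilityTheory
open scoped ENNReal

/-- The arcsine (Chebyshev invariant) distribution on (−1,1), with density
1/(π√(1−x²)) for |x| < 1 and 0 otherwise. -/
noncomputable def arcsineMeasure : Measure ℝ :=
  volume.withDensity fun x =>
    ENNReal.ofReal (if |x| < 1 then 1 / (Real.pi * Real.sqrt (1 - x ^ 2)) else 0)

/-- The uniform distribution on {−1, +1}. -/
noncomputable def rademacherMeasure : Measure ℝ :=
  (1 / 2 : ℝ≥0∞) • Measure.dirac (-1) + (1 / 2 : ℝ≥0∞) • Measure.dirac 1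

/-- The distribution of a unit-mean-power Nakagami-m amplitude, with density
2 m^m z^{2m−1} e^{−m z²}/Γ(m) for z ≥ 0 and 0 otherwise. -/
noncomputable def nakagamiMeasure (m : ℝ) : Measure ℝ :=
  volume.withDensity fun z =>
    ENNReal.ofReal (if 0 ≤ z then
      2 * m ^ m * z ^ (2 * m - 1) * Real.exp (-m * z ^ 2) / Real.Gamma m else 0)

/-!
Write `Y = h · U · S` with `U = 1 + ζd` and `S = ∑ xₖ`. The three factors are independent, so
`E[Yⁿ] = E[hⁿ] E[Uⁿ] E[Sⁿ]`. Here `E[Uⁿ] = ((1 - ζ)ⁿ + (1 + ζ)ⁿ) / 2`, the even Nakagami moments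
are the Gamma integrals `Γ(m + j) / (Γ(m) mʲ)`, and the substitution `x = sin θ` gives the
arcsine moments `E x = 0`, `E x² = 1/2`, `E x⁴ = 3/8`. For a sum of `n` independent centred
chips only the diagonal terms survive in `E[S²]`, and in `E[S⁴]` also the `6 E[xᵢ²] E[xⱼ²]`
cross terms, giving `E[S²] = n/2` and `E[S⁴] = 3n/8 + 3n(n - 1)/4 = 3(2n² - n)/8`.
-/

lemma integral_withDensity_ofReal {α : Type*} [MeasurableSpace α] {μ : Measure α}
    {f : α → ℝ} (hf : Measurable f) (hf0 : ∀ x, 0 ≤ f x) (g : α → ℝ) :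
    ∫ x, g x ∂μ.withDensity (fun x => ENNReal.ofReal (f x)) = ∫ x, f x * g x ∂μ := by
  rw [integral_withDensity_eq_integral_toReal_smul hf.ennreal_ofReal
    (ae_of_all _ fun _ => ENNReal.ofReal_lt_top)]
  simp only [ENNReal.toReal_ofReal (hf0 _), smul_eq_mul]

section Arcsine

open Real Set

noncomputable def arcsineDensity (x : ℝ) : ℝ :=
  if |x| < 1 then 1 / (π * √(1 - x ^ 2)) else 0

lemma arcsineDensity_nonneg (x : ℝ) : 0 ≤ arcsineDensity x := by
  unfold arcsineDensity; split_ifs <;> positivity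

lemma measurable_arcsineDensity : Measurable arcsineDensity :=
  Measurable.ite (measurableSet_lt (by fun_prop) measurable_const) (by fun_prop) measurable_const

lemma arcsineMeasure_eq_withDensity :
    arcsineMeasure = volume.withDensity fun x => ENNReal.ofReal (arcsineDensity x) := rfl

lemma ae_abs_le_one_arcsineMeasure : ∀ᵐ y ∂arcsineMeasure, |y| ≤ 1 := by
  rw [arcsineMeasure_eq_withDensity,
    ae_withDensity_iff measurable_arcsineDensity.ennreal_ofReal]
  refine ae_of_all _ fun y hy => ?_
  by_contra hy1
  simp [arcsineDensity, (not_le.1 hy1).not_gt] at hy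

lemma sin_image_Ioo : sin '' Ioo (-(π / 2)) (π / 2) = Ioo (-1) 1 := by
  simpa using continuous_sin.continuousOn.image_Ioo_of_strictMonoOn
    (by linarith [pi_pos]) strictMonoOn_sin

/-- Under `x = sin θ` the arcsine density becomes the uniform density `1/π` on `(-π/2, π/2)`. -/
lemma integral_pow_arcsineMeasure (n : ℕ) :
    ∫ y, y ^ n ∂arcsineMeasure = (∫ θ in -(π / 2)..π / 2, sin θ ^ n) / π := by
  rw [arcsineMeasure_eq_withDensity,
    integral_withDensity_ofReal measurable_arcsineDensity arcsineDensity_nonneg,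
    ← setIntegral_eq_integral_of_forall_compl_eq_zero (s := Ioo (-1) 1), ← sin_image_Ioo,
    integral_image_eq_integral_abs_deriv_smul measurableSet_Ioo
      (fun θ _ => (hasDerivAt_sin θ).hasDerivWithinAt) (injOn_sin.mono Ioo_subset_Icc_self),
    intervalIntegral.integral_of_le (by linarith [pi_pos]), integral_Ioc_eq_integral_Ioo,
    ← integral_div]
  · refine setIntegral_congr_fun measurableSet_Ioo fun θ hθ => ?_
    have hcos : 0 < cos θ := cos_pos_of_mem_Ioo hθ
    have hsin : |sin θ| < 1 := by
      rw [abs_lt, ← mem_Ioo, ← sin_image_Ioo]; exact mem_image_of_mem _ hθ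
    have hsqrt : √(1 - sin θ ^ 2) = cos θ := by rw [← cos_sq', sqrt_sq hcos.le]
    simp only [smul_eq_mul, arcsineDensity, if_pos hsin, hsqrt, abs_of_pos hcos]
    field_simp
  · intro x hx
    have : ¬ |x| < 1 := by rwa [abs_lt, ← mem_Ioo]
    simp [arcsineDensity, this]

lemma integral_arcsineMeasure_id : ∫ y, y ∂arcsineMeasure = 0 := by
  simpa [integral_sin] using integral_pow_arcsineMeasure 1

lemma integral_sq_arcsineMeasure : ∫ y, y ^ 2 ∂arcsineMeasure = 1 / 2 := by
  rw [integral_pow_arcsineMeasure, integral_sin_sq]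
  simp [field]

lemma integral_pow_four_arcsineMeasure : ∫ y, y ^ 4 ∂arcsineMeasure = 3 / 8 := by
  rw [integral_pow_arcsineMeasure, integral_sin_pow, integral_sin_sq]
  norm_num
  field_simp
  ring

end Arcsine

lemma integral_rademacherMeasure (g : ℝ → ℝ) :
    ∫ y, g y ∂rademacherMeasure = (g (-1) + g 1) / 2 := by
  have hint (a : ℝ) : Integrable g ((1 / 2 : ℝ≥0∞) • Measure.dirac a) :=
    (integrable_dirac (by simp)).smul_measure (by simp)
  rw [rademacherMeasure, integral_add_measure (hint _) (hint _), integral_smul_measure,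
    integral_smul_measure, integral_dirac, integral_dirac]
  simp [field]

section Nakagami

open Real Set

variable {m : ℝ}

noncomputable def nakagamiDensity (m z : ℝ) : ℝ :=
  if 0 ≤ z then 2 * m ^ m * z ^ (2 * m - 1) * exp (-m * z ^ 2) / Gamma m else 0

lemma nakagamiDensity_nonneg (hm : 0 < m) (z : ℝ) : 0 ≤ nakagamiDensity m z := by
  unfold nakagamiDensity
  split_ifs with hz
  · have := Gamma_pos_of_pos hm
    positivity
  · exact le_rfl

lemma measurable_nakagamiDensity : Measurable (nakagamiDensity m) :=
  Measurable.ite measurableSet_Ici (by fun_prop) measurable_const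

lemma nakagamiMeasure_eq_withDensity :
    nakagamiMeasure m = volume.withDensity fun z => ENNReal.ofReal (nakagamiDensity m z) := rfl

lemma integral_pow_two_mul_nakagamiMeasure (hm : 0 < m) (j : ℕ) :
    ∫ y, y ^ (2 * j) ∂nakagamiMeasure m = Gamma (m + j) / (Gamma m * m ^ j) := by
  rw [nakagamiMeasure_eq_withDensity,
    integral_withDensity_ofReal measurable_nakagamiDensity (nakagamiDensity_nonneg hm),
    ← setIntegral_eq_integral_of_forall_compl_eq_zero (s := Ici 0)
      (fun z (hz : ¬ 0 ≤ z) => by simp [nakagamiDensity, hz]), integral_Ici_eq_integral_Ioi]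
  have hq : -1 < 2 * m - 1 + 2 * j := by linarith [j.cast_nonneg (α := ℝ)]
  have hintegrand : ∀ z ∈ Ioi (0 : ℝ), nakagamiDensity m z * z ^ (2 * j)
      = 2 * m ^ m / Gamma m * (z ^ (2 * m - 1 + 2 * j) * exp (-m * z ^ (2 : ℝ))) := by
    intro z (hz : 0 < z)
    rw [nakagamiDensity, if_pos hz.le, rpow_add hz, rpow_two, ← rpow_natCast, ← rpow_natCast]
    push_cast
    ring
  have hpow : m ^ m * m ^ (-(2 * m - 1 + 2 * j + 1) / 2) = (m ^ j)⁻¹ := by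
    rw [← rpow_add hm, ← rpow_natCast, ← rpow_neg hm.le]
    ring_nf
  rw [setIntegral_congr_fun measurableSet_Ioi hintegrand, integral_const_mul,
    integral_rpow_mul_exp_neg_mul_rpow two_pos hq hm,
    show (2 * m - 1 + 2 * j + 1) / 2 = m + j by ring]
  calc 2 * m ^ m / Gamma m * (m ^ (-(2 * m - 1 + 2 * j + 1) / 2) * (1 / 2) * Gamma (m + j))
      = m ^ m * m ^ (-(2 * m - 1 + 2 * j + 1) / 2) * Gamma (m + j) / Gamma m := by ring
    _ = _ := by rw [hpow]; field_simp

lemma integral_sq_nakagamiMeasure (hm : 0 < m) : ∫ y, y ^ 2 ∂nakagamiMeasure m = 1 := by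
  have h := integral_pow_two_mul_nakagamiMeasure hm 1
  rw [Nat.cast_one, Gamma_add_one hm.ne'] at h
  rw [h]
  field_simp

lemma integral_pow_four_nakagamiMeasure (hm : 0 < m) :
    ∫ y, y ^ 4 ∂nakagamiMeasure m = (1 + m) / m := by
  have h := integral_pow_two_mul_nakagamiMeasure hm 2
  rw [Nat.cast_two, show m + 2 = m + 1 + 1 by ring, Gamma_add_one (by positivity),
    Gamma_add_one hm.ne'] at h
  rw [h]
  field_simp
  ring

end Nakagami

lemma integral_comp_of_map_eq {Ω : Type*} [MeasurableSpace Ω] {P : Measure Ω} {X : Ω → ℝ}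
    {μ : Measure ℝ} (hX : Measurable X) (hlaw : P.map X = μ) {g : ℝ → ℝ} (hg : Measurable g) :
    ∫ ω, g (X ω) ∂P = ∫ y, g y ∂μ := by
  rw [← hlaw, integral_map hX.aemeasurable hg.aestronglyMeasurable]

lemma integrable_pow_of_map_eq_arcsineMeasure {Ω : Type*} [MeasurableSpace Ω] {P : Measure Ω}
    [IsFiniteMeasure P] {X : Ω → ℝ} (hX : Measurable X) (hlaw : P.map X = arcsineMeasure)
    (n : ℕ) : Integrable (fun ω => X ω ^ n) P := by
  refine Integrable.of_bound (hX.pow_const n).aestronglyMeasurable 1 ?_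
  filter_upwards [ae_of_ae_map hX.aemeasurable (hlaw ▸ ae_abs_le_one_arcsineMeasure)] with ω hω
  simpa [abs_pow] using pow_le_one₀ (abs_nonneg _) hω

namespace ProbabilityTheory

open Finset

section IndepFun

variable {Ω ι β : Type*} [mβ : MeasurableSpace β]

lemma measurable_iSup_comap (f : ι → Ω → β) {S : Set ι} {i : ι} (hi : i ∈ S) :
    Measurable[⨆ j ∈ S, mβ.comap (f j)] (f i) :=
  (comap_measurable (f i)).mono (le_iSup₂ (f := fun j _ => mβ.comap (f j)) i hi) le_rfl

variable [MeasurableSpace Ω] {P : Measure Ω}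

lemma iIndepFun.indepFun_of_measurable_iSup {γ δ : Type*} [MeasurableSpace γ]
    [MeasurableSpace δ] {f : ι → Ω → β} (hf : iIndepFun f P) (hmeas : ∀ i, Measurable (f i))
    {S T : Set ι} (hST : Disjoint S T) {A : Ω → γ} {B : Ω → δ}
    (hA : Measurable[⨆ i ∈ S, mβ.comap (f i)] A) (hB : Measurable[⨆ i ∈ T, mβ.comap (f i)] B) :
    IndepFun A B P := by
  rw [IndepFun_iff_Indep]
  exact indep_of_indep_of_le (indep_iSup_of_disjoint (fun i => (hmeas i).comap_le) hf.iIndep hST)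
    hA.comap_le hB.comap_le

end IndepFun

section Moments

variable {Ω ι : Type*} [MeasurableSpace Ω] {P : Measure Ω} {A B : Ω → ℝ}

lemma IndepFun.integral_mul_pow (hAB : IndepFun A B P) (hA : Measurable A)
    (hB : Measurable B) (n : ℕ) :
    ∫ ω, (A ω * B ω) ^ n ∂P = (∫ ω, A ω ^ n ∂P) * ∫ ω, B ω ^ n ∂P := by
  simp_rw [mul_pow]
  exact (hAB.comp (measurable_id.pow_const n) (measurable_id.pow_const n)
    ).integral_fun_mul_eq_mul_integral (hA.pow_const n).aestronglyMeasurable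
    (hB.pow_const n).aestronglyMeasurable

lemma IndepFun.integrable_pow_mul_pow (hAB : IndepFun A B P)
    (hA : ∀ n, Integrable (fun ω => A ω ^ n) P) (hB : ∀ n, Integrable (fun ω => B ω ^ n) P)
    (k l : ℕ) : Integrable (fun ω => A ω ^ k * B ω ^ l) P :=
  (hAB.comp (measurable_id.pow_const k) (measurable_id.pow_const l)).integrable_mul (hA k) (hB l)

lemma IndepFun.integrable_add_pow (hAB : IndepFun A B P)
    (hA : ∀ n, Integrable (fun ω => A ω ^ n) P) (hB : ∀ n, Integrable (fun ω => B ω ^ n) P)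
    (n : ℕ) : Integrable (fun ω => (A ω + B ω) ^ n) P := by
  simp_rw [add_pow]
  exact integrable_finsetSum _ fun k _ =>
    (hAB.integrable_pow_mul_pow hA hB k (n - k)).mul_const _

lemma IndepFun.integral_add_pow (hAB : IndepFun A B P)
    (hA : ∀ n, Integrable (fun ω => A ω ^ n) P) (hB : ∀ n, Integrable (fun ω => B ω ^ n) P)
    (n : ℕ) :
    ∫ ω, (A ω + B ω) ^ n ∂P
      = ∑ k ∈ range (n + 1), (∫ ω, A ω ^ k ∂P) * (∫ ω, B ω ^ (n - k) ∂P) * n.choose k := by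
  simp_rw [add_pow]
  rw [integral_finsetSum _ fun k _ => (hAB.integrable_pow_mul_pow hA hB k (n - k)).mul_const _]
  refine sum_congr rfl fun k _ => ?_
  rw [integral_mul_const]
  congr 1
  exact (hAB.comp (measurable_id.pow_const k) (measurable_id.pow_const (n - k))
    ).integral_fun_mul_eq_mul_integral (hA k).aestronglyMeasurable (hB _).aestronglyMeasurable

lemma IndepFun.integral_add_sq [IsProbabilityMeasure P] (hAB : IndepFun A B P)
    (hA : ∀ n, Integrable (fun ω => A ω ^ n) P) (hB : ∀ n, Integrable (fun ω => B ω ^ n) P)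
    (hA1 : ∫ ω, A ω ∂P = 0) :
    ∫ ω, (A ω + B ω) ^ 2 ∂P = ∫ ω, A ω ^ 2 ∂P + ∫ ω, B ω ^ 2 ∂P := by
  rw [hAB.integral_add_pow hA hB]
  simp only [Nat.reduceAdd, sum_range_succ, range_one, sum_singleton, pow_zero, integral_const,
    probReal_univ, smul_eq_mul, mul_one, tsub_zero, one_mul, Nat.choose_zero_right,
    Nat.cast_one, pow_one, hA1, Nat.add_one_sub_one, zero_mul, Nat.choose_succ_self_right,
    Nat.cast_ofNat, add_zero, tsub_self, Nat.choose_self]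
  ring

lemma IndepFun.integral_add_pow_four [IsProbabilityMeasure P] (hAB : IndepFun A B P)
    (hA : ∀ n, Integrable (fun ω => A ω ^ n) P) (hB : ∀ n, Integrable (fun ω => B ω ^ n) P)
    (hA1 : ∫ ω, A ω ∂P = 0) (hB1 : ∫ ω, B ω ∂P = 0) :
    ∫ ω, (A ω + B ω) ^ 4 ∂P
      = ∫ ω, A ω ^ 4 ∂P + 6 * (∫ ω, A ω ^ 2 ∂P) * (∫ ω, B ω ^ 2 ∂P) + ∫ ω, B ω ^ 4 ∂P := by
  rw [hAB.integral_add_pow hA hB]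
  simp only [Nat.reduceAdd, sum_range_succ, range_one, sum_singleton, pow_zero, integral_const,
    probReal_univ, smul_eq_mul, mul_one, tsub_zero, one_mul, Nat.choose, Nat.cast_one, pow_one,
    hA1, Nat.add_one_sub_one, zero_mul, add_zero, Nat.cast_ofNat, Nat.reduceSub, hB1, mul_zero,
    tsub_self]
  ring

variable {X : ι → Ω → ℝ}

lemma iIndepFun.indepFun_sum_of_notMem (hX : iIndepFun X P) (hmeas : ∀ i, Measurable (X i))
    {s : Finset ι} {i : ι} (hi : i ∉ s) : IndepFun (X i) (fun ω => ∑ j ∈ s, X j ω) P := by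
  simpa only [Finset.sum_fn] using (hX.indepFun_finsetSum_of_notMem hmeas hi).symm

lemma iIndepFun.integrable_sum_pow (hX : iIndepFun X P) (hmeas : ∀ i, Measurable (X i))
    (hint : ∀ i n, Integrable (fun ω => X i ω ^ n) P) (s : Finset ι) (n : ℕ) :
    Integrable (fun ω => (∑ i ∈ s, X i ω) ^ n) P := by
  have := hX.isProbabilityMeasure
  classical
  induction s using Finset.induction_on generalizing n with
  | empty => simp
  | insert i s hi ih =>
    simp_rw [sum_insert hi]
    exact (hX.indepFun_sum_of_notMem hmeas hi).integrable_add_pow (hint i) ih n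

lemma iIndepFun.integral_sum_sq_and_pow_four (hX : iIndepFun X P)
    (hmeas : ∀ i, Measurable (X i)) (hint : ∀ i n, Integrable (fun ω => X i ω ^ n) P)
    {σ2 μ4 : ℝ} (h1 : ∀ i, ∫ ω, X i ω ∂P = 0) (h2 : ∀ i, ∫ ω, X i ω ^ 2 ∂P = σ2)
    (h4 : ∀ i, ∫ ω, X i ω ^ 4 ∂P = μ4) (s : Finset ι) :
    ∫ ω, (∑ i ∈ s, X i ω) ^ 2 ∂P = #s * σ2
      ∧ ∫ ω, (∑ i ∈ s, X i ω) ^ 4 ∂P = #s * μ4 + 3 * #s * (#s - 1) * σ2 ^ 2 := by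
  have := hX.isProbabilityMeasure
  classical
  induction s using Finset.induction_on with
  | empty => simp
  | insert i s hi ih =>
    have hmean : ∫ ω, ∑ j ∈ s, X j ω ∂P = 0 := by
      rw [integral_finsetSum _ fun j _ => by simpa using hint j 1]
      exact sum_eq_zero fun j _ => h1 j
    have hind := hX.indepFun_sum_of_notMem hmeas hi
    have hsum := hX.integrable_sum_pow hmeas hint s
    simp_rw [sum_insert hi]
    rw [hind.integral_add_sq (hint i) hsum (h1 i),
      hind.integral_add_pow_four (hint i) hsum (h1 i) hmean, h2, h4, ih.1, ih.2,
      card_insert_of_notMem hi]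
    push_cast
    constructor <;> ring

end Moments

section Symbol

variable {Ω ι : Type*} [MeasurableSpace Ω] {P : Measure Ω}

lemma integral_one_add_mul_pow_of_map_eq_rademacherMeasure {d : Ω → ℝ} (hd : Measurable d)
    (hlaw : P.map d = rademacherMeasure) (c : ℝ) (n : ℕ) :
    ∫ ω, (1 + c * d ω) ^ n ∂P = ((1 - c) ^ n + (1 + c) ^ n) / 2 := by
  rw [integral_comp_of_map_eq hd hlaw (g := fun y => (1 + c * y) ^ n) (by fun_prop),
    integral_rademacherMeasure]
  ring_nf

lemma iIndepFun.integral_sum_sq_and_pow_four_of_map_eq_arcsineMeasure [Fintype ι]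
    {X : ι → Ω → ℝ} (hX : iIndepFun X P) (hmeas : ∀ i, Measurable (X i))
    (hlaw : ∀ i, P.map (X i) = arcsineMeasure) :
    ∫ ω, (∑ i, X i ω) ^ 2 ∂P = Fintype.card ι / 2
      ∧ ∫ ω, (∑ i, X i ω) ^ 4 ∂P = 3 / 8 * (2 * (Fintype.card ι : ℝ) ^ 2 - Fintype.card ι) := by
  have := hX.isProbabilityMeasure
  have hmoment (k : ℕ) (i : ι) : ∫ ω, X i ω ^ k ∂P = ∫ y, y ^ k ∂arcsineMeasure :=
    integral_comp_of_map_eq (hmeas i) (hlaw i) (g := fun y => y ^ k) (by fun_prop)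
  obtain ⟨h2, h4⟩ := hX.integral_sum_sq_and_pow_four hmeas
    (fun i => integrable_pow_of_map_eq_arcsineMeasure (hmeas i) (hlaw i))
    (fun i => by simpa [integral_arcsineMeasure_id] using hmoment 1 i)
    (fun i => (hmoment 2 i).trans integral_sq_arcsineMeasure)
    (fun i => (hmoment 4 i).trans integral_pow_four_arcsineMeasure) Finset.univ
  rw [Finset.card_univ] at h2 h4
  exact ⟨by rw [h2]; ring, by rw [h4]; ring⟩

lemma indepFun_of_iIndepFun_sumElim [Fintype ι] {x : ι → Ω → ℝ} {d h : Ω → ℝ}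
    (hxmeas : ∀ k, Measurable (x k)) (hdmeas : Measurable d) (hhmeas : Measurable h)
    (hindep : iIndepFun (Sum.elim x ![d, h]) P) (c : ℝ) :
    IndepFun (fun ω => 1 + c * d ω) (fun ω => ∑ k, x k ω) P
      ∧ IndepFun h (fun ω => (1 + c * d ω) * ∑ k, x k ω) P := by
  set g := Sum.elim x ![d, h]
  have hmeas : ∀ i, Measurable (g i) := by
    rintro (k | j)
    · exact hxmeas k
    · fin_cases j
      exacts [hdmeas, hhmeas]
  have hd {S : Set (ι ⊕ Fin 2)} (hS : Sum.inr 0 ∈ S) :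
      Measurable[⨆ i ∈ S, MeasurableSpace.comap (g i) inferInstance] (fun ω => 1 + c * d ω) :=
    measurable_const.add (measurable_const.mul (measurable_iSup_comap g hS))
  have hsum {S : Set (ι ⊕ Fin 2)} (hS : ∀ k, Sum.inl k ∈ S) :
      Measurable[⨆ i ∈ S, MeasurableSpace.comap (g i) inferInstance] (fun ω => ∑ k, x k ω) :=
    Finset.measurable_sum _ fun k _ => measurable_iSup_comap g (hS k)
  exact ⟨hindep.indepFun_of_measurable_iSup hmeas (S := {Sum.inr 0}) (T := Set.range Sum.inl)
      (by simp [Set.disjoint_singleton_left]) (hd (Set.mem_singleton _))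
      (hsum Set.mem_range_self),
    hindep.indepFun_of_measurable_iSup hmeas (S := {Sum.inr 1}) (T := {Sum.inr 1}ᶜ)
      disjoint_compl_right (measurable_iSup_comap g (Set.mem_singleton _)) ((hd (by simp)).mul (hsum (by simp)))⟩

end Symbol

end ProbabilityTheory

theorem stmt_12_general {Ω : Type*} [MeasurableSpace Ω] (P : Measure Ω) [IsProbabilityMeasure P]
    (βr ζ β : ℕ) (hβr : 0 < βr) (hβ : β = ζ * βr)
    (m : ℝ) (hm : 1 ≤ m)
    (x : Fin βr → Ω → ℝ) (d h : Ω → ℝ)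
    (hxmeas : ∀ k, Measurable (x k)) (hdmeas : Measurable d) (hhmeas : Measurable h)
    (hxlaw : ∀ k, Measure.map (x k) P = arcsineMeasure)
    (hdlaw : Measure.map d P = rademacherMeasure)
    (hhlaw : Measure.map h P = nakagamiMeasure m)
    (hindep : iIndepFun (Sum.elim x ![d, h]) P)
    (Y : Ω → ℝ) (hY : Y = fun ω => h ω * (1 + (ζ : ℝ) * d ω) * ∑ k, x k ω)
    (ε₁ ε₂ : ℝ) :
    ε₁ * (∫ ω, Y ω ^ 2 ∂P) + ε₂ * (∫ ω, Y ω ^ 4 ∂P)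
      = ε₁ * (((βr : ℝ) ^ 2 + (β : ℝ) ^ 2) / (2 * (βr : ℝ)))
        + ε₂ * (3 * (1 + m) / (8 * m)) * (1 + 6 * (ζ : ℝ) ^ 2 + (ζ : ℝ) ^ 4)
          * (2 * (βr : ℝ) ^ 2 - (βr : ℝ)) := by
  obtain ⟨hUS, hhUS⟩ := indepFun_of_iIndepFun_sumElim hxmeas hdmeas hhmeas hindep ζ
  have hmoment (n : ℕ) : ∫ ω, Y ω ^ n ∂P = (∫ ω, h ω ^ n ∂P)
      * ((∫ ω, (1 + (ζ : ℝ) * d ω) ^ n ∂P) * ∫ ω, (∑ k, x k ω) ^ n ∂P) := by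
    simp_rw [hY, mul_assoc]
    rw [hhUS.integral_mul_pow hhmeas (by fun_prop), hUS.integral_mul_pow (by fun_prop) (by fun_prop)]
  have hh (n : ℕ) : ∫ ω, h ω ^ n ∂P = ∫ y, y ^ n ∂nakagamiMeasure m :=
    integral_comp_of_map_eq hhmeas hhlaw (g := fun y => y ^ n) (by fun_prop)
  have hx : iIndepFun x P := hindep.precomp (g := Sum.inl) Sum.inl_injective
  obtain ⟨hS2, hS4⟩ := hx.integral_sum_sq_and_pow_four_of_map_eq_arcsineMeasure hxmeas hxlaw
  have hm0 : 0 < m := by linarith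
  rw [hmoment, hmoment, integral_one_add_mul_pow_of_map_eq_rademacherMeasure hdmeas hdlaw,
    integral_one_add_mul_pow_of_map_eq_rademacherMeasure hdmeas hdlaw, hS2, hS4, hh, hh,
    integral_sq_nakagamiMeasure hm0, integral_pow_four_nakagamiMeasure hm0, Fintype.card_fin, hβ]
  have : (βr : ℝ) ≠ 0 := by positivity
  push_cast
  field_simp
  ring

/-- harvested DC of the correlator output
Y = h·(1+ζd)·Σ_{k=1}^{β_r} x_k of a β_r-SR-DCSK symbol (β = ζβ_r) over a
Nakagami-m channel: ε₁E[Y²] + ε₂E[Y⁴]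
= ε₁(β_r²+β²)/(2β_r) + ε₂(3(1+m)/(8m))(1+6ζ²+ζ⁴)(2β_r²−β_r). -/
theorem stmt_12 {Ω : Type*} [MeasurableSpace Ω] (P : Measure Ω) [IsProbabilityMeasure P]
    (βr ζ β : ℕ) (hβr : 0 < βr) (hζ : 0 < ζ) (hβ : β = ζ * βr)
    (m : ℝ) (hm : 1 ≤ m)
    (x : Fin βr → Ω → ℝ) (d h : Ω → ℝ)
    (hxmeas : ∀ k, Measurable (x k)) (hdmeas : Measurable d) (hhmeas : Measurable h)
    (hxlaw : ∀ k, Measure.map (x k) P = arcsineMeasure)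
    (hdlaw : Measure.map d P = rademacherMeasure)
    (hhlaw : Measure.map h P = nakagamiMeasure m)
    (hindep : iIndepFun (Sum.elim x ![d, h]) P)
    (Y : Ω → ℝ) (hY : Y = fun ω => h ω * (1 + (ζ : ℝ) * d ω) * ∑ k, x k ω)
    (ε₁ ε₂ : ℝ) :
    ε₁ * (∫ ω, Y ω ^ 2 ∂P) + ε₂ * (∫ ω, Y ω ^ 4 ∂P)
      = ε₁ * (((βr : ℝ) ^ 2 + (β : ℝ) ^ 2) / (2 * (βr : ℝ)))
        + ε₂ * (3 * (1 + m) / (8 * m)) * (1 + 6 * (ζ : ℝ) ^ 2 + (ζ : ℝ) ^ 4)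
          * (2 * (βr : ℝ) ^ 2 - (βr : ℝ)) :=
  stmt_12_general P βr ζ β hβr hβ m hm x d h hxmeas hdmeas hhmeas hxlaw hdlaw hhlaw hindep Y hY ε₁
    ε₂
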